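/- Let V be a unital Jordan bimodule over Kan(n). Then for every single index i, the operators on V satisfy R_{\bar{e_i}} R_{\bar{1}} R_{\bar{e_i}} = 0, and for i ≠ j, R_{\bar{e_i}} R_{\bar{1}} R_{\bar{e_j}} = - R_{\bar{e_j}} R_{\bar{1}} R_{\bar{e_i}}. -/

import Mathlib

open Finset in
/-- The Grassmann algebra `G_n` on `n` odd generators, realized as coefficient
functions on subsets of `{1,...,n}` (the basis is `e_I`, `I ⊆ {1,...,n}`). -/
abbrev Gn (n : ℕ) (F : Type) := Finset (Fin n) → F

/-- The sign `(-1)^{#{(i,j) ∈ I×J : j < i}}` arising when multiplying `e_I · e_J`. -/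
def gsign {n : ℕ} (I J : Finset (Fin n)) : ℤ :=
  (-1) ^ (((I ×ˢ J).filter (fun p => p.2 < p.1)).card)

/-- Multiplication in the Grassmann algebra `G_n`. -/
def gmul {F : Type} [Field F] {n : ℕ} (f g : Gn n F) : Gn n F :=
  fun K => ∑ I ∈ K.powerset, (gsign I (K \ I) : F) * f I * g (K \ I)

/-- The odd superderivation `∂/∂e_j` of `G_n`. -/
def pd {F : Type} [Field F] {n : ℕ} (j : Fin n) (f : Gn n F) : Gn n F :=
  fun I => if j ∈ I then 0 else ((-1 : F) ^ ((I.filter (fun i => i < j)).card)) * f (insert j I)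

/-- The grade involution of `G_n`: `e_I ↦ (-1)^{|I|} e_I`. -/
def gInv {F : Type} [Field F] {n : ℕ} (f : Gn n F) : Gn n F :=
  fun I => ((-1 : F) ^ I.card) * f I

/-- The Poisson bracket `{f,g} = (-1)^{|f|} ∑_i (∂f/∂e_i)(∂g/∂e_i)` of `G_n`
(the sign `(-1)^{|f|}` is incorporated bilinearly via the grade involution). -/
def gbr {F : Type} [Field F] {n : ℕ} (f g : Gn n F) : Gn n F :=
  ∑ i : Fin n, gmul (pd i (gInv f)) (pd i g)

/-- `f ∈ G_n` is homogeneous of parity `p`. -/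
def homog {F : Type} [Field F] {n : ℕ} (p : ZMod 2) (f : Gn n F) : Prop :=
  ∀ I : Finset (Fin n), ((I.card : ZMod 2) ≠ p) → f I = 0

/-- `(-1)^p` as an element of the field `F`, for `p : ZMod 2`. -/
def sgn (F : Type) [Field F] (p : ZMod 2) : F := if p = 0 then 1 else -1
/-- The Kantor double `Kan(n) = J(G_n) = G_n ⊕ \bar{G_n}`: an element `(a,b)`
represents `a + \bar{b}`. -/
abbrev Kan (n : ℕ) (F : Type) := Gn n F × Gn n F

/-- Multiplication of the Kantor double `Kan(n)`; the signs `(-1)^{|g|}` of the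
Kantor doubling process are incorporated bilinearly via the grade involution. -/
def kmul {F : Type} [Field F] {n : ℕ} (x y : Kan n F) : Kan n F :=
  (gmul x.1 y.1 + gbr x.2 (gInv y.2), gmul x.1 y.2 + gmul x.2 (gInv y.1))

/-- The basis element `e_I` of `G_n` (coefficient `1` at `I`). -/
def single {F : Type} [Field F] {n : ℕ} (I : Finset (Fin n)) : Gn n F :=
  fun J => if J = I then 1 else 0

/-- The element `e_I ∈ Kan(n)`. -/
def eK {F : Type} [Field F] {n : ℕ} (I : Finset (Fin n)) : Kan n F := (single I, 0)

/-- The element `\bar{e_I} ∈ Kan(n)`. In particular `beK ∅ = \bar{1}`. -/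
def beK {F : Type} [Field F] {n : ℕ} (I : Finset (Fin n)) : Kan n F := (0, single I)

/-- Homogeneity of parity `p` in `Kan(n)` (the bar flips parity). -/
def kHomog {F : Type} [Field F] {n : ℕ} (p : ZMod 2) (x : Kan n F) : Prop :=
  homog p x.1 ∧ homog (p + 1) x.2

/-- Even part of an element of `G_n`. -/
def evenP {F : Type} [Field F] {n : ℕ} (f : Gn n F) : Gn n F :=
  fun I => if (I.card : ZMod 2) = 0 then f I else 0

/-- Odd part of an element of `G_n`. -/
def oddP {F : Type} [Field F] {n : ℕ} (f : Gn n F) : Gn n F :=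
  fun I => if (I.card : ZMod 2) = 1 then f I else 0

/-- Even part of an element of `Kan(n)`. -/
def kEvenPart {F : Type} [Field F] {n : ℕ} (x : Kan n F) : Kan n F := (evenP x.1, oddP x.2)

/-- Odd part of an element of `Kan(n)`. -/
def kOddPart {F : Type} [Field F] {n : ℕ} (x : Kan n F) : Kan n F := (oddP x.1, evenP x.2)

/-- A super vector space is encoded as a product `V0 × V1`; homogeneity of parity `p`. -/
def vHomog {V0 V1 : Type} [Zero V0] [Zero V1] (p : ZMod 2) (v : V0 × V1) : Prop :=
  if p = 0 then v.2 = 0 else v.1 = 0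

/-- The left action of `Kan(n)` on a superbimodule determined from the right action
`act` by supercommutativity: `a·v = (-1)^{|a||v|} v·a` for homogeneous `a, v`. -/
def leftAct {F : Type} [Field F] {n : ℕ} {V0 V1 : Type} [AddCommGroup V0] [Module F V0]
    [AddCommGroup V1] [Module F V1]
    (act : V0 × V1 →ₗ[F] Kan n F →ₗ[F] V0 × V1) (x : Kan n F) (w : V0 × V1) : V0 × V1 :=
  act w (kEvenPart x) + act ((w.1, 0) : V0 × V1) (kOddPart x)
    - act ((0, w.2) : V0 × V1) (kOddPart x)

/-- Multiplication in the split null extension `E = Kan(n) ⊕ V`. -/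
def emul {F : Type} [Field F] {n : ℕ} {V0 V1 : Type} [AddCommGroup V0] [Module F V0]
    [AddCommGroup V1] [Module F V1]
    (act : V0 × V1 →ₗ[F] Kan n F →ₗ[F] V0 × V1)
    (z w : Kan n F × (V0 × V1)) : Kan n F × (V0 × V1) :=
  (kmul z.1 w.1, act z.2 w.1 + leftAct act z.1 w.2)

/-- Homogeneity in the split null extension. -/
def eHomog {F : Type} [Field F] {n : ℕ} {V0 V1 : Type} [AddCommGroup V0] [Module F V0]
    [AddCommGroup V1] [Module F V1] (p : ZMod 2) (z : Kan n F × (V0 × V1)) : Prop :=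
  kHomog p z.1 ∧ vHomog p z.2

/-- A supercommutative superalgebra structure `mul` (with homogeneity predicate `hom`)
is Jordan: supercommutativity and the linearized super Jordan identity hold for
homogeneous elements. -/
def JordanSuper (F : Type) [Field F] {E : Type} [AddCommGroup E] [Module F E]
    (hom : ZMod 2 → E → Prop) (mul : E → E → E) : Prop :=
  (∀ (p q : ZMod 2) (x y : E), hom p x → hom q y → mul x y = sgn F (p * q) • mul y x) ∧
  (∀ (px py pz pt : ZMod 2) (x y z t : E),
      hom px x → hom py y → hom pz z → hom pt t →
      mul (mul (mul x y) z) t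
        + sgn F (py * pz + py * pt + pz * pt) • mul (mul (mul x t) z) y
        + sgn F (px * py + px * pz + px * pt + pz * pt) • mul (mul (mul y t) z) x
      = mul (mul x y) (mul z t) + sgn F (py * pz) • mul (mul x z) (mul y t)
        + sgn F (pt * (py + pz)) • mul (mul x t) (mul y z))

/-- `V = V0 ⊕ V1` with right action `act` is a Jordan superbimodule over `Kan(n)`:
the split null extension `Kan(n) ⊕ V` is a (graded) Jordan superalgebra. -/
def IsJordanBimod {F : Type} [Field F] {n : ℕ} {V0 V1 : Type} [AddCommGroup V0] [Module F V0]
    [AddCommGroup V1] [Module F V1]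
    (act : V0 × V1 →ₗ[F] Kan n F →ₗ[F] V0 × V1) : Prop :=
  JordanSuper F (E := Kan n F × (V0 × V1)) eHomog (emul act) ∧
  (∀ (p q : ZMod 2) (z w : Kan n F × (V0 × V1)),
      eHomog p z → eHomog q w → eHomog (p + q) (emul act z w))

/-! Take the operator form of the linearized Jordan superidentity with `y = \bar{e_i}`,
`z = \bar{1}`, `t = \bar{e_j}`. In `Kan(n)` the bracket gives `\bar{e_i} \bar{e_j} = δ_{ij} 1`
and `\bar{e_i} \bar{1} = \bar{1} \bar{e_j} = 0`, so for a unital bimodule everything but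
`R_{\bar{e_i}} R_{\bar{1}} R_{\bar{e_j}} + R_{\bar{e_j}} R_{\bar{1}} R_{\bar{e_i}}` cancels, first
on homogeneous vectors and then on all of `V`. For `i = j` this is twice the operator, and `2 ≠ 0`. -/

section Grassmann

variable {F : Type} [Field F] {n : ℕ}

@[simp] lemma gmul_zero_left (f : Gn n F) : gmul 0 f = 0 := by
  funext K; simp [gmul]

@[simp] lemma gmul_zero_right (f : Gn n F) : gmul f 0 = 0 := by
  funext K; simp [gmul]

lemma gmul_neg_left (f g : Gn n F) : gmul (-f) g = -gmul f g := by
  funext K; simp [gmul, Finset.sum_neg_distrib]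

lemma gmul_single_empty_left (f : Gn n F) : gmul (single ∅) f = f := by
  funext K
  rw [gmul, Finset.sum_eq_single ∅ (fun I _ hI => by simp [single, hI]) (by simp)]
  simp [single, gsign]

@[simp] lemma gInv_zero : gInv (0 : Gn n F) = 0 := by
  funext I; simp [gInv]

lemma gInv_single (I : Finset (Fin n)) :
    gInv (single I : Gn n F) = (-1) ^ I.card • single I := by
  funext J; by_cases h : J = I <;> simp [gInv, single, h]

@[simp] lemma pd_zero (k : Fin n) : pd k (0 : Gn n F) = 0 := by
  funext I; simp [pd]

lemma pd_neg (k : Fin n) (f : Gn n F) : pd k (-f) = -pd k f := by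
  funext I; by_cases h : k ∈ I <;> simp [pd, h]

lemma pd_single_empty (k : Fin n) : pd k (single ∅ : Gn n F) = 0 := by
  funext I; simp [pd, single, Finset.insert_ne_empty]

lemma pd_single_singleton (k i : Fin n) :
    pd k (single {i} : Gn n F) = if k = i then single ∅ else 0 := by
  funext I
  by_cases hkI : k ∈ I
  · have hI : I ≠ ∅ := Finset.ne_empty_of_mem hkI
    split_ifs <;> simp [pd, single, hkI, hI]
  · have hins : insert k I = {i} ↔ k = i ∧ I = ∅ := by
      refine ⟨fun h => ?_, fun ⟨hki, hI⟩ => by simp [hki, hI]⟩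
      have hI : I = ∅ := by
        have hcard := congrArg Finset.card h
        rw [Finset.card_insert_of_notMem hkI, Finset.card_singleton] at hcard
        exact Finset.card_eq_zero.mp (by omega)
      subst hI
      exact ⟨Finset.singleton_inj.mp h, rfl⟩
    split_ifs with hki
    · subst hki
      by_cases hI : I = ∅ <;> simp [pd, single, hkI, hins, hI]
    · simp [pd, single, hkI, hins, hki]

@[simp] lemma gbr_zero_left (g : Gn n F) : gbr 0 g = 0 := by
  simp [gbr]

@[simp] lemma gbr_zero_right (f : Gn n F) : gbr f 0 = 0 := by
  simp [gbr]

lemma gbr_single_empty_left (g : Gn n F) : gbr (single ∅) g = 0 := by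
  simp [gbr, gInv_single, pd_single_empty]

lemma gbr_single_singleton_left (i : Fin n) (g : Gn n F) :
    gbr (single {i}) g = -pd i g := by
  rw [gbr, Finset.sum_eq_single i
    (fun k _ hk => by simp [gInv_single, pd_neg, pd_single_singleton, hk]) (by simp)]
  simp [gInv_single, pd_neg, pd_single_singleton, gmul_neg_left, gmul_single_empty_left]

end Grassmann

section Kantor

variable {F : Type} [Field F] {n : ℕ}

@[simp] lemma kmul_zero_left (x : Kan n F) : kmul 0 x = 0 := by
  simp [kmul, Prod.ext_iff]

@[simp] lemma kmul_zero_right (x : Kan n F) : kmul x 0 = 0 := by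
  simp [kmul, Prod.ext_iff]

lemma kmul_bar_bar (f g : Gn n F) : kmul (0, f) (0, g) = (gbr f (gInv g), 0) := by
  simp [kmul]

lemma beK_mul_beK (i j : Fin n) :
    kmul (beK {i} : Kan n F) (beK {j}) = if i = j then eK ∅ else 0 := by
  rw [beK, beK, kmul_bar_bar, gbr_single_singleton_left, gInv_single]
  split_ifs with h <;> simp [eK, pd_neg, pd_single_singleton, h]

lemma beK_mul_bar_one (i : Fin n) : kmul (beK {i} : Kan n F) (beK ∅) = 0 := by
  simp [beK, kmul_bar_bar, gbr_single_singleton_left, gInv_single, pd_single_empty]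

lemma bar_one_mul_beK (j : Fin n) : kmul (beK ∅ : Kan n F) (beK {j}) = 0 := by
  simp [beK, kmul_bar_bar, gbr_single_empty_left]

lemma one_mul_bar_one : kmul (eK ∅ : Kan n F) (beK ∅) = beK ∅ := by
  simp [kmul, eK, beK, gmul_single_empty_left]

lemma homog_single (I : Finset (Fin n)) : homog (I.card : ZMod 2) (single I : Gn n F) :=
  fun J hJ => by simp [single, show J ≠ I by rintro rfl; exact hJ rfl]

lemma kHomog_beK_singleton (i : Fin n) : kHomog 0 (beK {i} : Kan n F) :=
  ⟨fun _ _ => rfl, by simpa [beK] using homog_single (F := F) {i}⟩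

lemma kHomog_bar_one : kHomog 1 (beK ∅ : Kan n F) :=
  ⟨fun _ _ => rfl, by simpa [beK, show (1 + 1 : ZMod 2) = 0 from rfl] using homog_single (F := F) ∅⟩

end Kantor

section Sign

variable {F : Type} [Field F]

lemma sgn_zero : sgn F 0 = 1 := if_pos rfl

lemma sgn_one : sgn F 1 = -1 := if_neg (by decide)

lemma sgn_add (p q : ZMod 2) : sgn F (p + q) = sgn F p * sgn F q := by
  obtain rfl | rfl := (by decide : ∀ p : ZMod 2, p = 0 ∨ p = 1) p <;>
  obtain rfl | rfl := (by decide : ∀ p : ZMod 2, p = 0 ∨ p = 1) q <;>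
  simp [sgn_zero, sgn_one, show (1 + 1 : ZMod 2) = 0 from rfl]

end Sign

section Bimodule

variable {F : Type} [Field F] {n : ℕ} {V0 V1 : Type} [AddCommGroup V0] [Module F V0]
  [AddCommGroup V1] [Module F V1] (act : V0 × V1 →ₗ[F] Kan n F →ₗ[F] V0 × V1)

lemma kHomog_zero (p : ZMod 2) : kHomog p (0 : Kan n F) := ⟨fun _ _ => rfl, fun _ _ => rfl⟩

lemma vHomog_zero (p : ZMod 2) : vHomog p (0 : V0 × V1) := by
  unfold vHomog; split_ifs <;> rfl

lemma leftAct_zero_right (x : Kan n F) : leftAct act x 0 = 0 := by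
  simp [leftAct]

lemma emul_vec_alg (v : V0 × V1) (a : Kan n F) : emul act (0, v) (a, 0) = (0, act v a) := by
  simp [emul, leftAct_zero_right]

lemma emul_alg_alg (a b : Kan n F) : emul act (a, 0) (b, 0) = (kmul a b, (0 : V0 × V1)) := by
  simp [emul, leftAct_zero_right]

lemma emul_alg_vec (a : Kan n F) (v : V0 × V1) : emul act (a, 0) (0, v) = (0, leftAct act a v) := by
  simp [emul]

variable {act}

lemma kHomog_kmul (hJ : IsJordanBimod act) {p q : ZMod 2} {a b : Kan n F}
    (ha : kHomog p a) (hb : kHomog q b) : kHomog (p + q) (kmul a b) := by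
  have h := hJ.2 p q (a, 0) (b, 0) ⟨ha, vHomog_zero p⟩ ⟨hb, vHomog_zero q⟩
  rw [emul_alg_alg] at h
  exact h.1

lemma leftAct_eq_sgn_smul (hJ : IsJordanBimod act) {p q : ZMod 2} {a : Kan n F} {v : V0 × V1}
    (ha : kHomog q a) (hv : vHomog p v) : leftAct act a v = sgn F (q * p) • act v a := by
  have h := hJ.1.1 q p (a, 0) (0, v) ⟨ha, vHomog_zero q⟩ ⟨kHomog_zero p, hv⟩
  rw [emul_alg_vec, emul_vec_alg] at h
  simpa using congrArg Prod.snd h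

/-- In the superidentity for `x = w`, the term `((y t) z) x` is a left action; supercommutativity
turns it into a right action, which is where the sign `sgn F (pz * pt)` comes from. -/
lemma act_jordan (hJ : IsJordanBimod act) {p py pz pt : ZMod 2} {w : V0 × V1} {y z t : Kan n F}
    (hw : vHomog p w) (hy : kHomog py y) (hz : kHomog pz z) (ht : kHomog pt t) :
    act (act (act w y) z) t + sgn F (py * pz + py * pt + pz * pt) • act (act (act w t) z) y
        + sgn F (pz * pt) • act w (kmul (kmul y t) z)
      = act (act w y) (kmul z t) + sgn F (py * pz) • act (act w z) (kmul y t)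
        + sgn F (pt * (py + pz)) • act (act w t) (kmul y z) := by
  have h := hJ.1.2 p py pz pt (0, w) (y, 0) (z, 0) (t, 0)
    ⟨kHomog_zero p, hw⟩ ⟨hy, vHomog_zero py⟩ ⟨hz, vHomog_zero pz⟩ ⟨ht, vHomog_zero pt⟩
  simp only [emul_vec_alg, emul_alg_alg, emul_alg_vec] at h
  have h2 := congrArg Prod.snd h
  simp only [Prod.snd_add, Prod.smul_snd] at h2
  rwa [leftAct_eq_sgn_smul hJ (kHomog_kmul hJ (kHomog_kmul hJ hy ht) hz) hw, smul_smul,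
    ← sgn_add, (by decide : ∀ a b c d : ZMod 2, a * b + a * c + a * d + c * d + (b + d + c) * a
      = c * d) p py pz pt] at h2

lemma bar_ei_bar_one_anticomm_of_vHomog (hJ : IsJordanBimod act)
    (hu : ∀ v : V0 × V1, act v (eK ∅) = v)
    {p : ZMod 2} {w : V0 × V1} (hw : vHomog p w) (i j : Fin n) :
    act (act (act w (beK {i})) (beK ∅)) (beK {j})
      + act (act (act w (beK {j})) (beK ∅)) (beK {i}) = 0 := by
  have h := act_jordan hJ hw (kHomog_beK_singleton i) kHomog_bar_one (kHomog_beK_singleton j)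
  simp only [bar_one_mul_beK, beK_mul_bar_one, beK_mul_beK, mul_zero, zero_mul, add_zero,
    sgn_zero, one_smul, map_zero] at h
  split_ifs at h with hij
  · subst hij
    rw [one_mul_bar_one, hu] at h
    simpa using h
  · simpa using h

lemma bar_ei_bar_one_anticomm (hJ : IsJordanBimod act) (hu : ∀ v : V0 × V1, act v (eK ∅) = v)
    (i j : Fin n) (w : V0 × V1) :
    act (act (act w (beK {i})) (beK ∅)) (beK {j})
      + act (act (act w (beK {j})) (beK ∅)) (beK {i}) = 0 := by
  have h0 := bar_ei_bar_one_anticomm_of_vHomog hJ hu (p := 0) (w := (w.1, 0)) (by simp [vHomog]) i j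
  have h1 := bar_ei_bar_one_anticomm_of_vHomog hJ hu (p := 1) (w := (0, w.2)) (by simp [vHomog]) i j
  rw [← Prod.fst_add_snd w]
  simp only [map_add, LinearMap.add_apply]
  rw [add_add_add_comm, h0, h1, add_zero]

end Bimodule

theorem bar_ei_bar_one_relations_general {F : Type} [Field F] (hchar : (2 : F) ≠ 0)
    {n : ℕ}
    {V0 V1 : Type} [AddCommGroup V0] [Module F V0] [AddCommGroup V1] [Module F V1]
    (act : V0 × V1 →ₗ[F] Kan n F →ₗ[F] V0 × V1) (hJ : IsJordanBimod act)
    (hu : ∀ v : V0 × V1, act v (eK ∅) = v) :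
    (∀ (i : Fin n) (w : V0 × V1),
      act (act (act w (beK {i})) (beK ∅)) (beK {i}) = 0) ∧
    (∀ i j : Fin n, i ≠ j → ∀ w : V0 × V1,
      act (act (act w (beK {i})) (beK ∅)) (beK {j})
        = - act (act (act w (beK {j})) (beK ∅)) (beK {i})) := by
  have hanti := bar_ei_bar_one_anticomm hJ hu
  refine ⟨fun i w => ?_, fun i j _ w => eq_neg_of_add_eq_zero_left (hanti i j w)⟩
  have h := hanti i i w
  rw [← two_smul F, smul_eq_zero] at h
  exact h.resolve_left hchar

/-- for a unital Jordan bimodule `V` over `Kan(n)`: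
`R_{\bar{e_i}} R_{\bar{1}} R_{\bar{e_i}} = 0`, and for `i ≠ j`,
`R_{\bar{e_i}} R_{\bar{1}} R_{\bar{e_j}} = - R_{\bar{e_j}} R_{\bar{1}} R_{\bar{e_i}}`
(operators acting on the right, composed left to right). -/
theorem bar_ei_bar_one_relations {F : Type} [Field F] (hchar : (2 : F) ≠ 0)
    {n : ℕ} (hn : 2 ≤ n)
    {V0 V1 : Type} [AddCommGroup V0] [Module F V0] [AddCommGroup V1] [Module F V1]
    (act : V0 × V1 →ₗ[F] Kan n F →ₗ[F] V0 × V1) (hJ : IsJordanBimod act)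
    (hu : ∀ v : V0 × V1, act v (eK ∅) = v) :
    (∀ (i : Fin n) (w : V0 × V1),
      act (act (act w (beK {i})) (beK ∅)) (beK {i}) = 0) ∧
    (∀ i j : Fin n, i ≠ j → ∀ w : V0 × V1,
      act (act (act w (beK {i})) (beK ∅)) (beK {j})
        = - act (act (act w (beK {j})) (beK ∅)) (beK {i})) :=
  bar_ei_bar_one_relations_general hchar act hJ hu
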